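/- arXiv:0803.2853 — 2 statements merged into one kernel-verified Lean document; each statement's English description precedes it below -/
import Mathlib

section
/- Let A be a commutative ring that is an integral domain and an algebra over a commutative ring k, and let f, g ∈ A with f ≠ 0. Then the set of k-linear derivations D of A satisfying f·D(g) = g·D(f) is a Lie subalgebra of the Lie algebra of all k-linear derivations of A: it is closed under addition, under scalar multiplication by elements of k, and under the commutator bracket [R,S] = R∘S − S∘R. -/
/-!
Write `W D = f * D g - g * D f`, which is `k`-linear in `D`, so its kernel is a submodule.
Applying `R` to `W S = 0` and `S` to `W R = 0` and subtracting gives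
`f * W ⁅R, S⁆ = f * R (W S) - f * S (W R) + 2 * (S f * W R - R f * W S)`,
so `f * W ⁅R, S⁆ = 0` whenever `W R = W S = 0`, and `f` can be cancelled.
-/

namespace Derivation

variable {k A : Type*} [CommRing k] [CommRing A] [Algebra k A]

def wronskian (f g : A) : Derivation k A A →ₗ[k] A where
  toFun D := f * D g - g * D f
  map_add' R S := by simp only [add_apply]; ring
  map_smul' c D := by simp only [smul_apply, mul_smul_comm, RingHom.id_apply, smul_sub]

theorem wronskian_apply (f g : A) (D : Derivation k A A) :
    wronskian f g D = f * D g - g * D f :=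
  rfl

theorem mul_wronskian_lie (f g : A) (R S : Derivation k A A) :
    f * wronskian f g ⁅R, S⁆ =
      f * R (wronskian f g S) - f * S (wronskian f g R) +
        2 * (S f * wronskian f g R - R f * wronskian f g S) := by
  simp only [wronskian_apply, commutator_apply, map_sub, leibniz, smul_eq_mul]
  ring

theorem wronskian_lie_eq_zero {f g : A} (hf : IsLeftRegular f) {R S : Derivation k A A}
    (hR : wronskian f g R = 0) (hS : wronskian f g S = 0) : wronskian f g ⁅R, S⁆ = 0 :=
  hf <| show f * _ = f * 0 by rw [mul_wronskian_lie, hR, hS]; simp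

def wronskianLieSubalgebra {f : A} (g : A) (hf : IsLeftRegular f) :
    LieSubalgebra k (Derivation k A A) :=
  { LinearMap.ker (wronskian f g) with
    lie_mem' := wronskian_lie_eq_zero hf }

theorem mem_wronskianLieSubalgebra {f g : A} (hf : IsLeftRegular f) {D : Derivation k A A} :
    D ∈ wronskianLieSubalgebra g hf ↔ f * D g = g * D f :=
  sub_eq_zero

end Derivation

/-- Let `A` be a commutative integral domain that is an algebra over a commutative
ring `k`, and let `f g : A` with `f ≠ 0`. Then the set of `k`-linear derivations `D`
of `A` satisfying `f·D(g) = g·D(f)` is a Lie subalgebra of the Lie algebra of all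
`k`-linear derivations of `A` (so it is closed under addition, under scalar
multiplication by elements of `k`, and under the commutator bracket). -/
theorem wronskian_lieSubalgebra (k A : Type*) [CommRing k] [CommRing A] [IsDomain A]
    [Algebra k A] (f g : A) (hf : f ≠ 0) :
    ∃ L : LieSubalgebra k (Derivation k A A),
      ∀ D : Derivation k A A, D ∈ L ↔ f * D g = g * D f :=
  ⟨_, fun _ => Derivation.mem_wronskianLieSubalgebra (IsRegular.of_ne_zero hf).left⟩
end

section
/- Let N ≥ 1 and let f and g be nonzero formal power series in the N variables x₁, …, x_N over ℂ such that f·∂ᵢg = g·∂ᵢf for every i = 1, …, N, where ∂ᵢ denotes the formal partial derivative with respect to xᵢ. Write f = F·x^α + (higher terms) and g = G·x^β + (higher terms), where x^α and x^β are the lowest monomials of f and g respectively with respect to the graded lexicographic order on multi-indices and F, G ∈ ℂ are nonzero. Then α = β; that is, the minimal elements of the supports of f and g with respect to the graded lexicographic order coincide. -/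
/-!
Multiplying `f ∂ᵢg = g ∂ᵢf` by `xᵢ` turns `∂ᵢ` into the operator `x^γ ↦ γᵢ x^γ`, which does not
enlarge supports. Since graded lex is a monomial order, the coefficient of a product at the sum
of the two lowest exponents is the product of the lowest coefficients. Comparing the coefficients
of `x^(α+β)` on both sides gives `βᵢ F G = αᵢ G F`, hence `αᵢ = βᵢ`.
-/

/-- The formal partial derivative `∂ᵢ` of a multivariate formal power series:
the coefficient of `x^α` in `∂ᵢ f` is `(αᵢ + 1) · (coefficient of `x^(α + 1ᵢ)` in `f`)`. -/
noncomputable def mvPderiv {N : ℕ} (i : Fin N) (f : MvPowerSeries (Fin N) ℂ) :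
    MvPowerSeries (Fin N) ℂ :=
  fun α => ((α i : ℂ) + 1) * MvPowerSeries.coeff (α + Finsupp.single i 1) f

/-- The graded lexicographic order on multi-indices: compare first by total degree,
then lexicographically. -/
def grlexLE {N : ℕ} (α β : Fin N →₀ ℕ) : Prop :=
  (α.sum fun _ n => n) < (β.sum fun _ n => n) ∨
    ((α.sum fun _ n => n) = (β.sum fun _ n => n) ∧ toLex α ≤ toLex β)

open MvPowerSeries MonomialOrder

theorem grlexLE_iff_degLex_le {N : ℕ} {α β : Fin N →₀ ℕ} :
    grlexLE α β ↔ α ≼[degLex] β := by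
  rw [degLex_le_iff, Finsupp.DegLex.le_iff]
  rfl

theorem MvPowerSeries.coeff_add_mul_of_forall_le {σ R : Type*} [Semiring R]
    (m : MonomialOrder σ) {f g : MvPowerSeries σ R} {α β : σ →₀ ℕ}
    (hαmin : ∀ γ, coeff γ f ≠ 0 → α ≼[m] γ) (hβmin : ∀ γ, coeff γ g ≠ 0 → β ≼[m] γ) :
    coeff (α + β) (f * g) = coeff α f * coeff β g := by
  classical
  rw [coeff_mul, Finset.sum_eq_single (α, β)]
  · rintro ⟨a, b⟩ hab hne
    by_contra hprod
    have hab : m.toSyn a + m.toSyn b = m.toSyn α + m.toSyn β := by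
      rw [← map_add, ← map_add, Finset.HasAntidiagonal.mem_antidiagonal.1 hab]
    obtain ⟨hα, hβ⟩ := (add_eq_add_iff_eq_and_eq (hαmin a (left_ne_zero_of_mul hprod))
      (hβmin b (right_ne_zero_of_mul hprod))).1 hab.symm
    exact hne (by rw [m.toSyn.injective hα, m.toSyn.injective hβ])
  · exact fun h => (h (by simp)).elim

theorem coeff_X_mul_mvPderiv {N : ℕ} (i : Fin N) (f : MvPowerSeries (Fin N) ℂ)
    (γ : Fin N →₀ ℕ) : coeff γ (X i * mvPderiv i f) = γ i * coeff γ f := by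
  rw [X_def, coeff_monomial_mul, one_mul]
  split_ifs with hi
  · have hγi : 1 ≤ γ i := Finsupp.single_le_iff.1 hi
    change (((γ - Finsupp.single i 1 : Fin N →₀ ℕ) i : ℂ) + 1) * _ = _
    rw [tsub_add_cancel_of_le hi, Finsupp.tsub_apply, Finsupp.single_eq_same]
    push_cast [hγi]
    ring
  · have hγi : γ i = 0 := by simpa [Finsupp.single_le_iff] using hi
    simp [hγi]

theorem coeff_add_mul_X_mul_mvPderiv {N : ℕ} (i : Fin N) {f g : MvPowerSeries (Fin N) ℂ}
    {α β : Fin N →₀ ℕ} (hαmin : ∀ γ, coeff γ f ≠ 0 → α ≼[degLex] γ)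
    (hβmin : ∀ γ, coeff γ g ≠ 0 → β ≼[degLex] γ) :
    coeff (α + β) (f * (X i * mvPderiv i g)) = β i * (coeff α f * coeff β g) := by
  have hβmin' : ∀ γ, coeff γ (X i * mvPderiv i g) ≠ 0 → β ≼[degLex] γ := fun γ hγ =>
    hβmin γ (right_ne_zero_of_mul (coeff_X_mul_mvPderiv i g γ ▸ hγ))
  rw [coeff_add_mul_of_forall_le degLex hαmin hβmin', coeff_X_mul_mvPderiv]
  ring

theorem mvPowerSeries_wronskian_lowest_monomials_eq_general
    {N : ℕ} (f g : MvPowerSeries (Fin N) ℂ)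
    (h : ∀ i : Fin N, f * mvPderiv i g = g * mvPderiv i f)
    (α β : Fin N →₀ ℕ)
    (hα : MvPowerSeries.coeff α f ≠ 0)
    (hαmin : ∀ γ, MvPowerSeries.coeff γ f ≠ 0 → grlexLE α γ)
    (hβ : MvPowerSeries.coeff β g ≠ 0)
    (hβmin : ∀ γ, MvPowerSeries.coeff γ g ≠ 0 → grlexLE β γ) :
    α = β := by
  ext i
  have hαmin' γ (hγ : coeff γ f ≠ 0) : α ≼[degLex] γ := grlexLE_iff_degLex_le.1 (hαmin γ hγ)
  have hβmin' γ (hγ : coeff γ g ≠ 0) : β ≼[degLex] γ := grlexLE_iff_degLex_le.1 (hβmin γ hγ)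
  have hcoeff := congrArg (coeff (α + β)) (congrArg (X i * ·) (h i))
  simp only [mul_left_comm (X i)] at hcoeff
  rw [coeff_add_mul_X_mul_mvPderiv i hαmin' hβmin', add_comm α β,
    coeff_add_mul_X_mul_mvPderiv i hβmin' hαmin'] at hcoeff
  have hβα : (β i : ℂ) = α i :=
    mul_right_cancel₀ (mul_ne_zero hα hβ) (by linear_combination hcoeff)
  exact_mod_cast hβα.symm

/-- Let `N ≥ 1` and let `f`, `g` be nonzero formal power series in `N` variables over
`ℂ` with `f·∂ᵢg = g·∂ᵢf` for every `i`. If `α` (resp. `β`) is the minimal element of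
the support of `f` (resp. of `g`) with respect to the graded lexicographic order,
then `α = β`. -/
theorem mvPowerSeries_wronskian_lowest_monomials_eq
    {N : ℕ} (hN : 1 ≤ N) (f g : MvPowerSeries (Fin N) ℂ) (hf : f ≠ 0) (hg : g ≠ 0)
    (h : ∀ i : Fin N, f * mvPderiv i g = g * mvPderiv i f)
    (α β : Fin N →₀ ℕ)
    (hα : MvPowerSeries.coeff α f ≠ 0)
    (hαmin : ∀ γ, MvPowerSeries.coeff γ f ≠ 0 → grlexLE α γ)
    (hβ : MvPowerSeries.coeff β g ≠ 0)
    (hβmin : ∀ γ, MvPowerSeries.coeff γ g ≠ 0 → grlexLE β γ) :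
    α = β :=
  mvPowerSeries_wronskian_lowest_monomials_eq_general f g h α β hα hαmin hβ hβmin
end
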